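/- arXiv:1806.10410 — 4 statements merged into one kernel-verified Lean document; each statement's English description precedes it below -/
import Mathlib

section
/- Fix reals V > 0, γ ∈ [0,1], R*, R_i, θ* with θ* ≥ γ R* + (1 − γ) R_i and R_i ≥ θ*. Define h(Δ) = (V + Δ)^γ · ((R_i V + Δ θ*)/(V + Δ) − R*) for Δ ≥ 0. Then h is monotonically non-decreasing on [0, ∞). -/
theorem stmt3 (V γ Rstar Ri θstar : ℝ) (hV : 0 < V) (hγ0 : 0 ≤ γ) (hγ1 : γ ≤ 1)
    (hθ : γ * Rstar + (1 - γ) * Ri ≤ θstar) (hRi : θstar ≤ Ri) :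
    MonotoneOn (fun Δ : ℝ => (V + Δ) ^ γ * ((Ri * V + Δ * θstar) / (V + Δ) - Rstar))
      (Set.Ici (0 : ℝ)) := by
  have hderiv : ∀ Δ : ℝ, Δ ∈ Set.Ioi (0:ℝ) → HasDerivAt
      (fun Δ : ℝ => (V + Δ) ^ γ * ((Ri * V + Δ * θstar) / (V + Δ) - Rstar))
      ((1 * γ * (V + Δ) ^ (γ - 1)) * ((Ri * V + Δ * θstar) / (V + Δ) - Rstar)
        + (V + Δ) ^ γ * ((θstar * (V + Δ) - (Ri * V + Δ * θstar) * 1) / (V + Δ) ^ 2)) Δ := by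
    intro Δ hΔ
    have hΔ0 : 0 < Δ := hΔ
    have hu : 0 < V + Δ := by linarith
    have h1 : HasDerivAt (fun Δ : ℝ => V + Δ) 1 Δ := (hasDerivAt_id Δ).const_add V
    have h2 : HasDerivAt (fun Δ : ℝ => (V + Δ) ^ γ) (1 * γ * (V + Δ) ^ (γ - 1)) Δ :=
      h1.rpow_const (Or.inl hu.ne')
    have h3 : HasDerivAt (fun Δ : ℝ => Ri * V + Δ * θstar) θstar Δ := by
      simpa using ((hasDerivAt_id Δ).mul_const θstar).const_add (Ri * V)
    have h4 := (h3.div h1 hu.ne').sub_const Rstar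
    exact h2.mul h4
  apply monotoneOn_of_deriv_nonneg (convex_Ici 0)
  · apply ContinuousOn.mul
    · exact (continuousOn_const.add continuousOn_id).rpow_const (fun x _ => Or.inr hγ0)
    · apply ContinuousOn.sub _ continuousOn_const
      apply ContinuousOn.div
      · exact continuousOn_const.add (continuousOn_id.mul continuousOn_const)
      · exact continuousOn_const.add continuousOn_id
      · intro x hx
        have hx0 : (0:ℝ) ≤ x := hx
        positivity
  · rw [interior_Ici]
    intro Δ hΔ
    exact (hderiv Δ hΔ).differentiableAt.differentiableWithinAt
  · rw [interior_Ici]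
    intro Δ hΔ
    have hΔ0 : 0 < Δ := hΔ
    have hu : 0 < V + Δ := by linarith
    rw [(hderiv Δ hΔ).deriv]
    have hγθ : 0 ≤ γ * (θstar - Rstar) := by nlinarith
    have hnum : 0 ≤ γ * ((Ri * V + Δ * θstar) - Rstar * (V + Δ))
        + (θstar * (V + Δ) - (Ri * V + Δ * θstar)) := by
      nlinarith [mul_nonneg hV.le (sub_nonneg.2 hθ), mul_nonneg hΔ0.le hγθ]
    have hpow1 : 0 < (V + Δ) ^ (γ - 1) := Real.rpow_pos_of_pos hu _
    have hpowγ : (V + Δ) ^ γ = (V + Δ) ^ (γ - 1) * (V + Δ) := by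
      rw [← Real.rpow_add_one hu.ne' (γ - 1)]
      norm_num
    have heq : (1 * γ * (V + Δ) ^ (γ - 1)) * ((Ri * V + Δ * θstar) / (V + Δ) - Rstar)
        + (V + Δ) ^ γ * ((θstar * (V + Δ) - (Ri * V + Δ * θstar) * 1) / (V + Δ) ^ 2)
        = (V + Δ) ^ (γ - 1) * ((γ * ((Ri * V + Δ * θstar) - Rstar * (V + Δ))
            + (θstar * (V + Δ) - (Ri * V + Δ * θstar))) / (V + Δ)) := by
      rw [hpowγ]
      field_simp
    rw [heq]
    exact mul_nonneg hpow1.le (div_nonneg hnum hu.le)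
end

section
/- Consider a nested singleton choice model with M nests: given offered parameters u_1,…,u_M ≥ 0, nest i is chosen with probability u_i/(1 + ∑_{i'} u_{i'}) and no purchase happens with probability 1/(1 + ∑_{i'} u_{i'}). Suppose the same offer is repeated until the first no-purchase event (the epoch), and let n̂_i be the number of times nest i is chosen during the epoch. Then E[n̂_i] = u_i. -/
/-!
Nest `i` is bought at step `t` of the epoch exactly when the draws `0, …, t - 1` are purchases
and draw `t` is nest `i`. By independence this has probability `p q ^ t` with
`p = u i / (1 + S)` and `q = S / (1 + S)`, so the expected count is `p / (1 - q) = u i`.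
The draws are not assumed measurable: their events are only null measurable, because the
outer measures of the fibres already add up to one.
-/

open MeasureTheory ProbabilityTheory Set

section

variable {Ω : Type*} [MeasurableSpace Ω] {μ : Measure Ω}

theorem nullMeasurableSet_of_measure_add_measure_compl_le [IsFiniteMeasure μ] {s : Set Ω}
    (h : μ s + μ sᶜ ≤ μ univ) : NullMeasurableSet s μ := by
  set T := toMeasurable μ s
  have hT : MeasurableSet T := measurableSet_toMeasurable _ _
  have hsT : s ⊆ T := subset_toMeasurable _ _
  have hcompl : μ sᶜ = μ (T \ s) + μ Tᶜ := by
    have hout : sᶜ \ T = Tᶜ := by rw [sdiff_eq, inter_eq_right.2 (compl_subset_compl.2 hsT)]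
    rw [← measure_inter_add_sdiff sᶜ hT, hout, inter_comm, ← sdiff_eq]
  have hgap : μ (T \ s) = 0 := by
    have : μ s + μ Tᶜ + μ (T \ s) ≤ μ s + μ Tᶜ + 0 :=
      calc μ s + μ Tᶜ + μ (T \ s) = μ s + μ sᶜ := by
            rw [hcompl, add_comm (μ (T \ s)), add_assoc]
        _ ≤ μ univ := h
        _ = μ s + μ Tᶜ + 0 := by
          rw [add_zero, ← measure_add_measure_compl hT, measure_toMeasurable]
    exact nonpos_iff_eq_zero.1 (ENNReal.le_of_add_le_add_left (by finiteness) this)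
  exact hT.nullMeasurableSet.congr (ae_eq_set.2 ⟨hgap, by simp [sdiff_eq_empty.2 hsT]⟩)

theorem nullMeasurableSet_preimage_of_tsum_measure_fiber_le [IsFiniteMeasure μ]
    {α : Type*} [Countable α] {f : Ω → α} (h : ∑' a, μ (f ⁻¹' {a}) ≤ μ univ)
    (s : Set α) :
    NullMeasurableSet (f ⁻¹' s) μ := by
  have hfiber (t : Set α) : μ (f ⁻¹' t) ≤ ∑' a : t, μ (f ⁻¹' {(a : α)}) := by
    rw [← biUnion_preimage_singleton]
    exact measure_biUnion_le μ t.to_countable _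
  refine nullMeasurableSet_of_measure_add_measure_compl_le (le_trans ?_ h)
  rw [← preimage_compl, ← ENNReal.summable.tsum_add_tsum_compl (s := s) ENNReal.summable]
  exact add_le_add (hfiber s) (hfiber sᶜ)

namespace ProbabilityTheory.iIndepFun

theorem measure_mem_and_forall_lt_mem {β : Type*} {X : ℕ → Ω → β}
    (hX : iIndepFun (m := fun _ => ⊤) X μ) (B C : Set β) (t : ℕ) :
    μ {ω | X t ω ∈ B ∧ ∀ s < t, X s ω ∈ C}
      = μ (X t ⁻¹' B) * ∏ s ∈ Finset.range t, μ (X s ⁻¹' C) := by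
  have hevent : {ω | X t ω ∈ B ∧ ∀ s < t, X s ω ∈ C}
      = ⋂ s ∈ insert t (Finset.range t), X s ⁻¹' Function.update (fun _ => C) t B s := by
    ext ω
    simp only [mem_ofPred_eq, mem_iInter, Finset.mem_insert, Finset.mem_range, mem_preimage]
    constructor
    · rintro ⟨hB, hC⟩ s (rfl | hs)
      · simpa using hB
      · simpa [hs.ne] using hC s hs
    · intro h
      exact ⟨by simpa using h t (Or.inl rfl),
        fun s hs => by simpa [hs.ne] using h s (Or.inr hs)⟩
  rw [hevent, hX.measure_inter_preimage_eq_mul _ (fun _ _ => trivial),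
    Finset.prod_insert Finset.notMem_range_self, Function.update_self]
  congr 1
  exact Finset.prod_congr rfl fun s hs => by
    rw [Function.update_of_ne (Finset.mem_range.1 hs).ne]

theorem lintegral_tsum_indicator_mem_and_forall_lt_notMem [IsProbabilityMeasure μ] {β : Type*}
    {X : ℕ → Ω → β} (hX : iIndepFun (m := fun _ => ⊤) X μ)
    (hmeas : ∀ t (s : Set β), NullMeasurableSet (X t ⁻¹' s) μ) {B D : Set β} {p r : ENNReal}
    (hB : ∀ t, μ (X t ⁻¹' B) = p) (hD : ∀ t, μ (X t ⁻¹' D) = r) :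
    ∫⁻ ω, ∑' t, {ω' | X t ω' ∈ B ∧ ∀ s < t, X s ω' ∉ D}.indicator 1 ω ∂μ
      = p * r⁻¹ := by
  have hmeasA (t : ℕ) : NullMeasurableSet {ω | X t ω ∈ B ∧ ∀ s < t, X s ω ∉ D} μ := by
    have : {ω | X t ω ∈ B ∧ ∀ s < t, X s ω ∉ D}
        = X t ⁻¹' B ∩ ⋂ s, ⋂ _ : s < t, X s ⁻¹' Dᶜ := by
      ext ω
      simp
    rw [this]
    exact (hmeas t B).inter (.iInter fun s => .iInter fun _ => hmeas s Dᶜ)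
  have hDc (t : ℕ) : μ (X t ⁻¹' Dᶜ) = 1 - r := by
    rw [preimage_compl, prob_compl_eq_one_sub₀ (hmeas t D), hD]
  have hr : r ≤ 1 := hD 0 ▸ prob_le_one
  calc _ = ∑' t, μ {ω | X t ω ∈ B ∧ ∀ s < t, X s ω ∈ Dᶜ} :=
        (lintegral_tsum fun t => aemeasurable_one.indicator₀ (hmeasA t)).trans
          (tsum_congr fun t => lintegral_indicator_one₀ (hmeasA t))
    _ = ∑' t : ℕ, p * (1 - r) ^ t := by
        refine tsum_congr fun t => ?_
        simp only [hX.measure_mem_and_forall_lt_mem, hB, hDc, Finset.prod_const,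
          Finset.card_range]
    _ = p * r⁻¹ := by
        rw [ENNReal.tsum_mul_left, ENNReal.tsum_geometric,
          ENNReal.sub_sub_cancel ENNReal.one_ne_top hr]

end ProbabilityTheory.iIndepFun

end

theorem stmt6_general {Ω : Type*} [MeasurableSpace Ω] (P : Measure Ω)
    [IsProbabilityMeasure P]
    (M : ℕ) (u : Fin M → ℝ) (hu : ∀ i, 0 ≤ u i)
    (X : ℕ → Ω → Option (Fin M))
    (hindep : iIndepFun (m := fun _ => ⊤) X P)
    (hsome : ∀ t i, P {ω | X t ω = some i}
      = ENNReal.ofReal (u i / (1 + ∑ i', u i')))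
    (hnone : ∀ t, P {ω | X t ω = none}
      = ENNReal.ofReal (1 / (1 + ∑ i', u i')))
    (i : Fin M) :
    ∫⁻ ω, (∑' t : ℕ,
        Set.indicator {ω' | X t ω' = some i ∧ ∀ s < t, X s ω' ≠ none}
          (fun _ => (1 : ENNReal)) ω) ∂P
      = ENNReal.ofReal (u i) := by
  set S := ∑ i', u i'
  have hS0 : 0 ≤ S := Finset.sum_nonneg fun j _ => hu j
  have hS : 0 < 1 + S := by linarith
  have hterm (j : Fin M) : 0 ≤ u j / (1 + S) := div_nonneg (hu j) hS.le
  have hfibers (t : ℕ) : ∑' a, P (X t ⁻¹' {a}) ≤ P univ := by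
    simp only [tsum_fintype, Fintype.sum_option, preimage, mem_singleton_iff, hnone, hsome]
    rw [← ENNReal.ofReal_sum_of_nonneg fun j _ => hterm j,
      ← ENNReal.ofReal_add (by positivity) (Finset.sum_nonneg fun j _ => hterm j),
      ← Finset.sum_div, ← add_div, div_self hS.ne', ENNReal.ofReal_one, measure_univ]
  have hmeas t := nullMeasurableSet_preimage_of_tsum_measure_fiber_le (hfibers t)
  calc _ = ENNReal.ofReal (u i / (1 + S)) * (ENNReal.ofReal (1 / (1 + S)))⁻¹ :=
        hindep.lintegral_tsum_indicator_mem_and_forall_lt_notMem hmeas (B := {some i})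
          (D := {none}) (fun t => hsome t i) hnone
    _ = ENNReal.ofReal (u i) := by
        rw [← ENNReal.ofReal_inv_of_pos (by positivity), ← ENNReal.ofReal_mul (hterm i)]
        congr 1
        field_simp

open MeasureTheory ProbabilityTheory in
/-- In the nested singleton model, repeat the same offer (with nest-level
utilities `u i`) i.i.d. until the first no-purchase draw (`none`). The expected
number of times nest `i` is chosen during this epoch equals `u i`. -/
theorem stmt6 {Ω : Type*} [MeasurableSpace Ω] (P : Measure Ω)
    [IsProbabilityMeasure P]
    (M : ℕ) (hM : 1 ≤ M) (u : Fin M → ℝ) (hu : ∀ i, 0 ≤ u i)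
    (X : ℕ → Ω → Option (Fin M))
    (hindep : iIndepFun (m := fun _ => ⊤) X P)
    (hsome : ∀ t i, P {ω | X t ω = some i}
      = ENNReal.ofReal (u i / (1 + ∑ i', u i')))
    (hnone : ∀ t, P {ω | X t ω = none}
      = ENNReal.ofReal (1 / (1 + ∑ i', u i')))
    (i : Fin M) :
    ∫⁻ ω, (∑' t : ℕ,
        Set.indicator {ω' | X t ω' = some i ∧ ∀ s < t, X s ω' ≠ none}
          (fun _ => (1 : ENNReal)) ω) ∂P
      = ENNReal.ofReal (u i) :=
  stmt6_general P M u hu X hindep hsome hnone i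
end

section
/- Let M ≥ 1 and suppose for each i ∈ [M] real numbers φ_{i,θ} ∈ [0,1] and u_{i,θ} ≥ 0 are given for θ in finite sets K_i, with a distinguished element ∞ ∈ K_i satisfying u_{i,∞} = 0. Let θ* = (θ*_1,…,θ*_M) maximize R(θ) = (∑_i φ_{i,θ_i} u_{i,θ_i})/(1 + ∑_i u_{i,θ_i}) and set λ = R(θ*). Then for every i with u_{i,θ*_i} > 0 it holds that φ_{i,θ*_i} ≥ λ. -/
theorem stmt12 (M : ℕ) (hM : 1 ≤ M) (K : Fin M → Type) [∀ i, Fintype (K i)]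
    (inft : ∀ i, K i)
    (phi u : ∀ i, K i → ℝ)
    (hphi0 : ∀ i θ, 0 ≤ phi i θ) (hphi1 : ∀ i θ, phi i θ ≤ 1)
    (hu : ∀ i θ, 0 ≤ u i θ) (hinf : ∀ i, u i (inft i) = 0)
    (θstar : ∀ i, K i)
    (hmax : ∀ θ : ∀ i, K i,
      (∑ i, phi i (θ i) * u i (θ i)) / (1 + ∑ i, u i (θ i))
        ≤ (∑ i, phi i (θstar i) * u i (θstar i)) / (1 + ∑ i, u i (θstar i))) :
    ∀ j, 0 < u j (θstar j) →
      (∑ i, phi i (θstar i) * u i (θstar i)) / (1 + ∑ i, u i (θstar i))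
        ≤ phi j (θstar j) := by
  intro j hj
  classical
  set θ' : ∀ i, K i := Function.update θstar j (inft j) with hθ'
  have key : ∀ v : ∀ i, K i → ℝ,
      ∑ i, v i (θ' i) = (∑ i, v i (θstar i)) - v j (θstar j) + v j (inft j) := by
    intro v
    rw [← Finset.add_sum_erase _ (fun i => v i (θ' i)) (Finset.mem_univ j),
        ← Finset.add_sum_erase _ (fun i => v i (θstar i)) (Finset.mem_univ j)]
    have : ∑ i ∈ Finset.univ.erase j, v i (θ' i)
        = ∑ i ∈ Finset.univ.erase j, v i (θstar i) := by
      apply Finset.sum_congr rfl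
      intro i hi
      rw [hθ', Function.update_of_ne (Finset.mem_erase.1 hi).1]
    rw [this, hθ', Function.update_self]
    ring
  set A := ∑ i, phi i (θstar i) * u i (θstar i) with hA
  set B := 1 + ∑ i, u i (θstar i) with hB
  set b := u j (θstar j) with hb
  set a := phi j (θstar j) * u j (θstar j) with ha
  have hApos : 0 ≤ A := Finset.sum_nonneg fun i _ => mul_nonneg (hphi0 _ _) (hu _ _)
  have hsum_erase : 0 ≤ ∑ i ∈ Finset.univ.erase j, u i (θstar i) :=
    Finset.sum_nonneg fun i _ => hu _ _
  have hBb : B - b = 1 + ∑ i ∈ Finset.univ.erase j, u i (θstar i) := by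
    rw [hB, hb, ← Finset.add_sum_erase _ (fun i => u i (θstar i)) (Finset.mem_univ j)]
    ring
  have hBbpos : 0 < B - b := by rw [hBb]; linarith
  have hBpos : 0 < B := by linarith
  have h1 : ∑ i, phi i (θ' i) * u i (θ' i) = A - a := by
    rw [key (fun i θ => phi i θ * u i θ), hinf]; ring
  have h2 : 1 + ∑ i, u i (θ' i) = B - b := by
    rw [key u, hinf]; rw [hB]; ring
  have hm := hmax θ'
  rw [h1, h2] at hm
  rw [div_le_div_iff₀ hBbpos hBpos] at hm
  -- (A - a) * B ≤ A * (B - b)  →  A * b ≤ a * B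
  have hab : A * b ≤ a * B := by nlinarith
  rw [div_le_iff₀ hBpos]
  have hbpos : 0 < b := hj
  nlinarith [hab]
end

section
/- Fix γ ∈ [0,1], V > 0, and reals R_i, R*, θ* with R_i ≥ θ* ≥ γR* + (1−γ)R_i. Then for all Δ ≥ 0, (V+Δ)^{γ−1}(R_i V + Δθ*) − (V+Δ)^γ R* ≥ V^{γ−1} R_i V − V^γ R*, i.e., (V+Δ)^γ((R_iV + Δθ*)/(V+Δ) − R*) ≥ V^γ(R_i − R*). -/
theorem stmt16 (γ V Ri Rstar θstar : ℝ)
    (hγ0 : 0 ≤ γ) (hγ1 : γ ≤ 1) (hV : 0 < V)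
    (hθ : γ * Rstar + (1 - γ) * Ri ≤ θstar) (hRi : θstar ≤ Ri) :
    ∀ Δ : ℝ, 0 ≤ Δ →
      V ^ γ * (Ri - Rstar)
        ≤ (V + Δ) ^ γ * ((Ri * V + Δ * θstar) / (V + Δ) - Rstar) := by
  intro Δ hΔ
  have hW : 0 < V + Δ := by linarith
  rcases eq_or_lt_of_le hγ0 with hγ | hγpos
  · -- γ = 0
    have hγ' : γ = 0 := hγ.symm
    subst hγ'
    have hθR : θstar = Ri := le_antisymm hRi (by linarith)
    subst hθR
    simp only [Real.rpow_zero, one_mul]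
    have h : (θstar * V + Δ * θstar) / (V + Δ) = θstar := by
      field_simp
    rw [h]
  · -- γ > 0
    have hRR : Rstar ≤ Ri := by
      have h := hθ.trans hRi
      nlinarith
    have hWpow : (0:ℝ) < (V + Δ) ^ (γ - 1) := Real.rpow_pos_of_pos hW _
    have hgm : V ^ γ * (V + Δ) ^ (1 - γ) ≤ γ * V + (1 - γ) * (V + Δ) :=
      Real.geom_mean_le_arith_mean2_weighted hγ0 (by linarith) hV.le hW.le (by ring)
    have h1 : V ^ γ ≤ (V + (1 - γ) * Δ) * (V + Δ) ^ (γ - 1) := by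
      have h := mul_le_mul_of_nonneg_right hgm hWpow.le
      have hid : (V + Δ) ^ (1 - γ) * (V + Δ) ^ (γ - 1) = 1 := by
        rw [← Real.rpow_add hW]; norm_num
      calc V ^ γ = V ^ γ * ((V + Δ) ^ (1 - γ) * (V + Δ) ^ (γ - 1)) := by rw [hid]; ring
        _ = V ^ γ * (V + Δ) ^ (1 - γ) * (V + Δ) ^ (γ - 1) := by ring
        _ ≤ (γ * V + (1 - γ) * (V + Δ)) * (V + Δ) ^ (γ - 1) := h
        _ = (V + (1 - γ) * Δ) * (V + Δ) ^ (γ - 1) := by ring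
    have h2 : (V + (1 - γ) * Δ) * (Ri - Rstar) ≤ Ri * V + Δ * θstar - (V + Δ) * Rstar := by
      nlinarith [mul_nonneg hΔ (sub_nonneg.2 hθ)]
    have key : (V + Δ) ^ γ * ((Ri * V + Δ * θstar) / (V + Δ) - Rstar)
        = (V + Δ) ^ (γ - 1) * (Ri * V + Δ * θstar - (V + Δ) * Rstar) := by
      rw [show γ = γ - 1 + 1 by ring, Real.rpow_add hW, Real.rpow_one]
      field_simp
      ring
    rw [key]
    calc V ^ γ * (Ri - Rstar)
        ≤ ((V + (1 - γ) * Δ) * (V + Δ) ^ (γ - 1)) * (Ri - Rstar) :=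
          mul_le_mul_of_nonneg_right h1 (sub_nonneg.2 hRR)
      _ = (V + Δ) ^ (γ - 1) * ((V + (1 - γ) * Δ) * (Ri - Rstar)) := by ring
      _ ≤ (V + Δ) ^ (γ - 1) * (Ri * V + Δ * θstar - (V + Δ) * Rstar) :=
          mul_le_mul_of_nonneg_left h2 hWpow.le
end
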